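/- Every complex root α of the polynomial P₅(T) = T⁸ − T⁷ + 2T⁶ − 4T⁵ + 16T⁴ − 20T³ + 50T² − 125T + 625 satisfies |α| = √5. -/

import Mathlib

/-!
Since `T⁸ P₅(5/T) = 5⁴ P₅(T)`, we can write `P₅(T) = T⁴ h(T + 5/T)` with the real quartic
`h = X⁴ - X³ - 18X² + 11X + 46`. By the intermediate value theorem `h` has four real roots, all in
`(-2√5, 2√5)`, so these are all of its complex roots. A root `α` of `P₅` therefore satisfies
`α² - bα + 5 = 0` with `b` real and `b² < 20`: the roots of this quadratic are non-real and
conjugate, so `|α|² = 5`.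
-/

open Polynomial

noncomputable def P5 : Polynomial ℂ :=
  X ^ 8 - X ^ 7 + 2 * X ^ 6 - 4 * X ^ 5 + 16 * X ^ 4 - 20 * X ^ 3 + 50 * X ^ 2 - 125 * X + 625

open ComplexConjugate

theorem Polynomial.exists_isRoot_mem_Icc_of_mul_nonpos {p : ℝ[X]} {a b : ℝ} (hab : a ≤ b)
    (h : p.eval a * p.eval b ≤ 0) : ∃ r ∈ Set.Icc a b, p.IsRoot r := by
  have h0 : (0 : ℝ) ∈ Set.uIcc (p.eval a) (p.eval b) := by
    rw [Set.mem_uIcc]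
    rcases mul_nonpos_iff.1 h with h | h
    exacts [Or.inr ⟨h.2, h.1⟩, Or.inl h]
  obtain ⟨r, hr, hr0⟩ := intermediate_value_uIcc p.continuous.continuousOn h0
  exact ⟨r, Set.uIcc_of_le hab ▸ hr, hr0⟩

theorem Polynomial.mem_of_isRoot_of_natDegree_le_card {R : Type*} [CommRing R] [IsDomain R]
    {p : R[X]} (hp : p ≠ 0) {s : Finset R} (hs : ∀ x ∈ s, p.IsRoot x)
    (hcard : p.natDegree ≤ s.card) {x : R} (hx : p.IsRoot x) : x ∈ s := by
  have hle : s.val ≤ p.roots :=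
    (Multiset.le_iff_subset s.nodup).2 fun y hy => (mem_roots hp).2 (hs y hy)
  have heq : s.val = p.roots :=
    Multiset.eq_of_le_of_card_le hle ((card_roots' p).trans hcard)
  rwa [← Finset.mem_val, heq, mem_roots hp]

theorem Polynomial.exists_eq_algebraMap_of_isRoot_map {K L : Type*} [Field K] [CommRing L]
    [IsDomain L] [Algebra K L] {p : K[X]} (hp : p ≠ 0) {s : Finset K}
    (hs : ∀ r ∈ s, p.IsRoot r) (hcard : p.natDegree ≤ s.card) {z : L}
    (hz : (p.map (algebraMap K L)).IsRoot z) : ∃ r ∈ s, z = algebraMap K L r := by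
  have hmem : z ∈ s.map ⟨_, (algebraMap K L).injective⟩ := by
    refine mem_of_isRoot_of_natDegree_le_card (map_ne_zero hp) ?_ ?_ hz
    · simp only [Finset.mem_map, Function.Embedding.coeFn_mk, forall_exists_index, and_imp]
      rintro _ r hr rfl
      exact (isRoot_map_iff (algebraMap K L).injective).2 (hs r hr)
    · rwa [natDegree_map, Finset.card_map]
  obtain ⟨r, hr, rfl⟩ := Finset.mem_map.1 hmem
  exact ⟨r, hr, rfl⟩

theorem Complex.norm_eq_sqrt_of_sq_sub_mul_add_eq_zero {b q : ℝ} (hbq : b ^ 2 < 4 * q) {z : ℂ}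
    (hz : z ^ 2 - b * z + q = 0) : ‖z‖ = √q := by
  have hz' : conj z ^ 2 - b * conj z + q = 0 := by
    simpa using congrArg conj hz
  have hz_ne : conj z ≠ z := by
    intro h
    obtain ⟨x, rfl⟩ := Complex.conj_eq_iff_real.1 h
    have hx : x ^ 2 - b * x + q = 0 := by exact_mod_cast hz
    nlinarith [sq_nonneg (2 * x - b)]
  have hsum : z + conj z = b := by
    have : (z - conj z) * (z + conj z - b) = 0 := by linear_combination hz - hz'
    linear_combination (mul_eq_zero.1 this).resolve_left (sub_ne_zero.2 hz_ne.symm)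
  have hprod : z * conj z = q := by linear_combination z * hsum - hz
  rw [Complex.mul_conj, Complex.ofReal_inj] at hprod
  rw [Complex.norm_def, hprod]

noncomputable def realWeilP5 : ℝ[X] := X ^ 4 - X ^ 3 - 18 * X ^ 2 + 11 * X + 46

theorem eval_P5_eq_pow_mul_eval_realWeilP5 {z : ℂ} (hz : z ≠ 0) :
    P5.eval z = z ^ 4 * (realWeilP5.map (algebraMap ℝ ℂ)).eval (z + 5 / z) := by
  simp only [P5, realWeilP5, Polynomial.map_add, Polynomial.map_sub, Polynomial.map_mul,
    Polynomial.map_pow, map_X, Polynomial.map_ofNat, eval_add, eval_sub, eval_mul, eval_pow,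
    eval_X, eval_ofNat]
  field_simp
  ring

theorem natDegree_realWeilP5 : realWeilP5.natDegree = 4 := by
  unfold realWeilP5
  compute_degree!

theorem exists_eq_ofReal_sq_lt_of_isRoot_realWeilP5 {z : ℂ}
    (hz : (realWeilP5.map (algebraMap ℝ ℂ)).IsRoot z) : ∃ r : ℝ, r ^ 2 < 20 ∧ z = r := by
  obtain ⟨r₁, ⟨h₁, h₁'⟩, hr₁⟩ := exists_isRoot_mem_Icc_of_mul_nonpos (p := realWeilP5)
    (a := -4) (b := -3) (by norm_num) (by norm_num [realWeilP5])
  obtain ⟨r₂, ⟨h₂, h₂'⟩, hr₂⟩ := exists_isRoot_mem_Icc_of_mul_nonpos (p := realWeilP5)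
    (a := -2) (b := -1) (by norm_num) (by norm_num [realWeilP5])
  obtain ⟨r₃, ⟨h₃, h₃'⟩, hr₃⟩ := exists_isRoot_mem_Icc_of_mul_nonpos (p := realWeilP5)
    (a := 2) (b := 3) (by norm_num) (by norm_num [realWeilP5])
  obtain ⟨r₄, ⟨h₄, h₄'⟩, hr₄⟩ := exists_isRoot_mem_Icc_of_mul_nonpos (p := realWeilP5)
    (a := 4) (b := 22 / 5) (by norm_num) (by norm_num [realWeilP5])
  have hcard : ({r₁, r₂, r₃, r₄} : Finset ℝ).card = 4 := by
    rw [Finset.card_eq_four]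
    exact ⟨r₁, r₂, r₃, r₄, by linarith, by linarith, by linarith, by linarith, by linarith,
      by linarith, rfl⟩
  have hp : realWeilP5 ≠ 0 := ne_zero_of_natDegree_gt (n := 0) (by simp [natDegree_realWeilP5])
  obtain ⟨r, hr, rfl⟩ := exists_eq_algebraMap_of_isRoot_map hp (s := {r₁, r₂, r₃, r₄})
    (by simpa using ⟨hr₁, hr₂, hr₃, hr₄⟩) (by rw [natDegree_realWeilP5, hcard]) hz
  refine ⟨r, ?_, rfl⟩
  simp only [Finset.mem_insert, Finset.mem_singleton] at hr
  rcases hr with rfl | rfl | rfl | rfl <;> nlinarith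

theorem P5_roots_abs (α : ℂ) (hα : P5.eval α = 0) : ‖α‖ = Real.sqrt 5 := by
  have hα0 : α ≠ 0 := by
    rintro rfl
    norm_num [P5] at hα
  obtain ⟨b, hb, hβ⟩ := exists_eq_ofReal_sq_lt_of_isRoot_realWeilP5 (z := α + 5 / α) <| by
    simpa [eval_P5_eq_pow_mul_eval_realWeilP5 hα0, hα0] using hα
  refine Complex.norm_eq_sqrt_of_sq_sub_mul_add_eq_zero (b := b) (by linarith) ?_
  rw [← hβ]
  field_simp
  push_cast
  ring
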